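/- There exists a numbering with the Kolmogorov property that is not acceptable; that is, there is a numbering φ such that for every numbering ψ there is a constant c with: for every e there exists j ≤ c·e + c with φ_j = ψ_e, yet there is some numbering ψ for which no computable function f satisfies φ_{f(e)} = ψ_e for all e. -/

import Mathlib

/-- A numbering: a family of partial functions `φ_e : ℕ →. ℕ` such that the
two-variable map `(e, x) ↦ φ_e x` is partial recursive. -/
def IsNumbering (φ : ℕ → ℕ →. ℕ) : Prop := Partrec₂ φ

/-- `φ` is acceptable: every numbering translates into it via a computable function. -/
def Acceptable (φ : ℕ → ℕ →. ℕ) : Prop :=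
  ∀ ψ : ℕ → ℕ →. ℕ, IsNumbering ψ → ∃ f : ℕ → ℕ, Computable f ∧ ∀ e, φ (f e) = ψ e

/-- `φ` has the Kolmogorov property: every numbering translates into it with
linearly bounded (not necessarily computable) translation. -/
def KolmogorovProperty (φ : ℕ → ℕ →. ℕ) : Prop :=
  ∀ ψ : ℕ → ℕ →. ℕ, IsNumbering ψ → ∃ c : ℕ, ∀ e, ∃ j, j ≤ c * e + c ∧ φ j = ψ e

/-- `φ` is computably bounded: every numbering translates into it with a
computable bound on the translated index. -/
def ComputablyBounded (φ : ℕ → ℕ →. ℕ) : Prop :=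
  ∀ ψ : ℕ → ℕ →. ℕ, IsNumbering ψ → ∃ f : ℕ → ℕ, Computable f ∧ ∀ e, ∃ j, j ≤ f e ∧ φ j = ψ e

/-- `φ` is polynomially bounded with degree `p`. -/
def PolyBounded (φ : ℕ → ℕ →. ℕ) (p : ℕ) : Prop :=
  ∀ ψ : ℕ → ℕ →. ℕ, IsNumbering ψ → ∃ c : ℕ, ∀ e, ∃ j, j ≤ c * e ^ p + c ∧ φ j = ψ e

/-- The set of `φ`-minimal indices. -/
def MINset (φ : ℕ → ℕ →. ℕ) : Set ℕ := {e | ∀ j < e, φ j ≠ φ e}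

/-- Minimal indices of functions converging exactly on input 0. -/
def Mset (φ : ℕ → ℕ →. ℕ) : Set ℕ :=
  {e | e ∈ MINset φ ∧ (φ e 0).Dom ∧ ∀ x ≥ 1, ¬ (φ e x).Dom}

/-- `minIndex φ e` is the minimal index computing the same function as `e`. -/
noncomputable def minIndex (φ : ℕ → ℕ →. ℕ) (e : ℕ) : ℕ := sInf {j | φ j = φ e}

/-- A partial recursive `U` is optimal: every partial recursive `V` is simulated
with only linear increase of programs. -/
def OptimalMachine (U : ℕ →. ℕ) : Prop :=
  Nat.Partrec U ∧ ∀ V : ℕ →. ℕ, Nat.Partrec V →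
    ∃ c : ℕ, ∀ p, (V p).Dom → ∃ q, q ≤ c * p + c ∧ U q = V p

/-- Kolmogorov complexity of `x` with respect to `U`: the least binary length of
a `U`-program for `x`. (`Nat.size q` is the binary length of `q`.) -/
noncomputable def Cpx (U : ℕ →. ℕ) (x : ℕ) : ℕ :=
  sInf {n | ∃ q, U q = Part.some x ∧ Nat.size q = n}

/-- Kolmogorov complexity of (the canonical code of) a finite set. -/
noncomputable def CpxFinset (U : ℕ →. ℕ) (A : Finset ℕ) : ℕ :=
  Cpx U (Encodable.encode A)

/-- `A` is `(m,k)`-recursive: a computable labelling of `k`-tuples that is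
correct in at least `m` coordinates on every tuple. -/
def MKRecursive (m k : ℕ) (A : Set ℕ) : Prop :=
  ∃ f : (Fin k → ℕ) → Fin k → Bool, Computable f ∧
    ∀ x : Fin k → ℕ, m ≤ {i : Fin k | (f x i = true ↔ x i ∈ A)}.ncard

/-!
Index `j` of the numbering `θ` encodes, through `j + 1 = 2 ^ i * (2 * (3 * e + k) + 1)`, a
program `i` of the universal function, an argument `e` and a mode `k < 3`. Mode `0` runs
`φ_i(e, ·)` made undefined at `0`; mode `k + 1` first computes `v = φ_i(e, 0)` and then runs
`φ_i(e, x)` only if the diagonal computation `φ_v(v)` does not output `k` within `x` steps.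
Whatever the function `g = φ_i(e, ·)`, one of the three modes reproduces `g` exactly, and the
three candidates lie below `6 · 2 ^ i · (e + 1)`: this is the Kolmogorov property. For the
constant numbering `ψ_e = e`, however, an index of `ψ_e` must use a mode `k + 1` with
`φ_e(e) ≠ k`, so a computable translation would give a computable `χ` with `φ_e(e) ≠ χ(e)`
for all `e`, which fails at an index `e` of `χ`.
-/

namespace KolmogorovNotAcceptable

open Nat.Partrec (Code)
open Nat.Partrec.Code Denumerable Encodable

lemma findGreatest_two_pow_dvd {i m n : ℕ} (hm : Odd m) (hn : 2 ^ i * m ≤ n + 1) :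
    Nat.findGreatest (fun l => 2 ^ l ∣ 2 ^ i * m) n = i := by
  refine Nat.findGreatest_eq_iff.2 ⟨?_, fun _ => dvd_mul_right _ _, fun l hil _ hdvd => ?_⟩
  · have := Nat.lt_two_pow_self (n := i)
    have := Nat.le_mul_of_pos_right (2 ^ i) hm.pos
    omega
  · have h2 : 2 ^ (i + 1) ∣ 2 ^ i * m := (Nat.pow_dvd_pow 2 hil).trans hdvd
    rw [pow_succ] at h2
    exact (Nat.not_even_iff_odd.2 hm) (even_iff_two_dvd.2
      (Nat.dvd_of_mul_dvd_mul_left (by positivity) h2))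

def index (i e k : ℕ) : ℕ := 2 ^ i * (2 * (3 * e + k) + 1) - 1

def program (j : ℕ) : ℕ := Nat.findGreatest (fun l => 2 ^ l ∣ j + 1) j

def payload (j : ℕ) : ℕ := (j + 1) / 2 ^ program j / 2

def argument (j : ℕ) : ℕ := payload j / 3

def mode (j : ℕ) : ℕ := payload j % 3

lemma index_add_one (i e k : ℕ) : index i e k + 1 = 2 ^ i * (2 * (3 * e + k) + 1) := by
  have : 0 < 2 ^ i * (2 * (3 * e + k) + 1) := by positivity
  unfold index
  omega

lemma program_index (i e k : ℕ) : program (index i e k) = i := by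
  rw [program, index_add_one]
  exact findGreatest_two_pow_dvd (odd_two_mul_add_one _) (by rw [← index_add_one])

lemma payload_index (i e k : ℕ) : payload (index i e k) = 3 * e + k := by
  rw [payload, program_index, index_add_one, Nat.mul_div_cancel_left _ (by positivity)]
  omega

lemma argument_index (i e : ℕ) {k : ℕ} (hk : k < 3) : argument (index i e k) = e := by
  rw [argument, payload_index]
  omega

lemma mode_index (i e : ℕ) {k : ℕ} (hk : k < 3) : mode (index i e k) = k := by
  rw [mode, payload_index]
  omega

lemma index_le (i e : ℕ) {k : ℕ} (hk : k < 3) :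
    index i e k ≤ 6 * 2 ^ i * e + 6 * 2 ^ i := by
  have := index_add_one i e k
  have : 2 ^ i * (2 * (3 * e + k) + 1) ≤ 2 ^ i * (6 * e + 6) :=
    Nat.mul_le_mul_left _ (by omega)
  nlinarith

lemma primrec_two_pow : Primrec (2 ^ · : ℕ → ℕ) :=
  (Primrec₂.unpaired'.1 Nat.Primrec.pow).comp (Primrec.const 2) Primrec.id

lemma primrec_program : Primrec program := by
  have hdvd : PrimrecPred fun p : ℕ × ℕ => (p.1 + 1) % 2 ^ p.2 = 0 :=
    Primrec.eq.comp (Primrec.nat_mod.comp (Primrec.succ.comp Primrec.fst)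
      (primrec_two_pow.comp Primrec.snd)) (Primrec.const 0)
  exact Primrec.nat_findGreatest Primrec.id <| PrimrecRel.of_eq hdvd.primrecRel
    fun _ _ => Nat.dvd_iff_mod_eq_zero.symm

lemma primrec_payload : Primrec payload :=
  Primrec.nat_div.comp (Primrec.nat_div.comp Primrec.succ
    (primrec_two_pow.comp primrec_program)) (Primrec.const 2)

lemma primrec_mode : Primrec mode := Primrec.nat_mod.comp primrec_payload (Primrec.const 3)

lemma primrec_argument : Primrec argument :=
  Primrec.nat_div.comp primrec_payload (Primrec.const 3)

def universal (i e : ℕ) : ℕ →. ℕ := fun x => eval (ofNat Code i) (Nat.pair e x)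

lemma exists_universal_eq {ψ : ℕ → ℕ →. ℕ} (hψ : Partrec₂ ψ) :
    ∃ i, ∀ e, universal i e = ψ e := by
  obtain ⟨c, hc⟩ := exists_code.1 (Partrec₂.unpaired'.2 hψ)
  exact ⟨encode c, fun e => funext fun x => by simp [universal, hc]⟩

lemma exists_eval_self_eq {χ : ℕ → ℕ} (hχ : Computable χ) :
    ∃ e, eval (ofNat Code e) e = Part.some (χ e) := by
  obtain ⟨c, hc⟩ := exists_code.1 (Partrec.nat_iff.1 hχ.partrec)
  exact ⟨encode c, by rw [ofNat_encode, hc]; rfl⟩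

def offZero (g : ℕ →. ℕ) : ℕ →. ℕ := fun x => if x = 0 then Part.none else g x

def guarded (b : ℕ) (g : ℕ →. ℕ) : ℕ →. ℕ := fun x =>
  (g 0).bind fun v => if evaln x (ofNat Code v) v = some b then Part.none else g x

def variant (k : ℕ) (g : ℕ →. ℕ) : ℕ →. ℕ :=
  if k = 0 then offZero g else guarded (k - 1) g

lemma offZero_eq {g : ℕ →. ℕ} (hg : ¬(g 0).Dom) : offZero g = g := by
  funext x
  by_cases hx : x = 0
  · subst hx; simpa [offZero, eq_comm] using Part.eq_none_iff'.2 hg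
  · simp [offZero, hx]

lemma guarded_eq {g : ℕ →. ℕ} {b v : ℕ} (hv : v ∈ g 0)
    (hb : b ∉ eval (ofNat Code v) v) : guarded b g = g := by
  funext x
  have hs : evaln x (ofNat Code v) v ≠ some b := fun h => hb (evaln_sound h)
  simp [guarded, Part.eq_some_iff.2 hv, hs]

lemma exists_variant_eq (g : ℕ →. ℕ) : ∃ k < 3, variant k g = g := by
  by_cases hg : (g 0).Dom
  · obtain ⟨v, hv⟩ := Part.dom_iff_mem.1 hg
    by_cases h0 : 0 ∈ eval (ofNat Code v) v
    · refine ⟨2, by norm_num, guarded_eq hv fun h1 => ?_⟩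
      exact absurd (Part.mem_unique h0 h1) zero_ne_one
    · exact ⟨1, by norm_num, guarded_eq hv h0⟩
  · exact ⟨0, by norm_num, offZero_eq hg⟩

lemma variant_eq_const {k e : ℕ} {g : ℕ →. ℕ} (h : variant k g = fun _ => Part.some e) :
    k ≠ 0 ∧ k - 1 ∉ eval (ofNat Code e) e := by
  have hk : k ≠ 0 := by
    rintro rfl
    simpa [variant, offZero] using congrFun h 0
  refine ⟨hk, fun hdiag => ?_⟩
  simp only [variant, hk, if_false] at h
  have h0 : e ∈ g 0 := by
    have := Part.eq_some_iff.1 (congrFun h 0)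
    simp only [guarded, evaln, reduceCtorEq, if_false, Part.mem_bind_iff] at this
    obtain ⟨_, _, h0⟩ := this
    exact h0
  obtain ⟨s, hs⟩ := evaln_complete.1 hdiag
  have := congrFun h s
  simp [guarded, Part.eq_some_iff.2 h0, Option.mem_def.1 hs] at this

lemma partrec₂_variant {α : Type*} [Primcodable α] {k : α → ℕ} {G : α → ℕ →. ℕ}
    (hk : Computable k) (hG : Partrec₂ G) : Partrec₂ fun a => variant (k a) (G a) := by
  have hG0 : Partrec fun p : α × ℕ => G p.1 0 := hG.comp Computable.fst (Computable.const 0)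
  have hoff : Partrec fun p : α × ℕ => offZero (G p.1) p.2 :=
    (Partrec.cond (Primrec.eq.decide.comp Primrec.snd (Primrec.const 0)).to_comp
      Partrec.none hG).of_eq fun p => by simp [offZero, Bool.cond_decide]
  have hevaln : Computable fun q : (α × ℕ) × ℕ => evaln q.1.2 (ofNat Code q.2) q.2 :=
    primrec_evaln.to_comp.comp (((Computable.snd.comp Computable.fst).pair
      ((Computable.ofNat Code).comp Computable.snd)).pair Computable.snd)
  have hbit : Computable fun q : (α × ℕ) × ℕ => some (k q.1.1 - 1) :=
    Computable.option_some.comp (Primrec.nat_sub.to_comp.comp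
      (hk.comp (Computable.fst.comp Computable.fst)) (Computable.const 1))
  have hguard : Partrec fun p : α × ℕ => guarded (k p.1 - 1) (G p.1) p.2 :=
    (hG0.bind (Partrec.cond (Primrec.eq.decide.to_comp.comp hevaln hbit) Partrec.none
      (hG.comp (Computable.fst.comp Computable.fst)
        (Computable.snd.comp Computable.fst))).to₂).of_eq
      fun p => by simp [guarded, Bool.cond_decide]
  exact (Partrec.cond ((Primrec.eq.decide.comp Primrec.id (Primrec.const 0)).to_comp.comp
      (hk.comp Computable.fst)) hoff hguard).of_eq fun p => by
    by_cases hp : k p.1 = 0 <;> simp [variant, hp]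

def theta (j : ℕ) : ℕ →. ℕ := variant (mode j) (universal (program j) (argument j))

lemma partrec₂_theta : Partrec₂ theta :=
  partrec₂_variant primrec_mode.to_comp <| eval_part.comp
    ((Computable.ofNat Code).comp (primrec_program.to_comp.comp Computable.fst))
    (Primrec₂.natPair.to_comp.comp (primrec_argument.to_comp.comp Computable.fst) Computable.snd)

lemma kolmogorovProperty_theta : KolmogorovProperty theta := by
  intro ψ hψ
  obtain ⟨i, hi⟩ := exists_universal_eq hψ
  refine ⟨6 * 2 ^ i, fun e => ?_⟩
  obtain ⟨k, hk, hvar⟩ := exists_variant_eq (ψ e)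
  refine ⟨index i e k, index_le i e hk, ?_⟩
  rw [theta, program_index, argument_index i e hk, mode_index i e hk, hi, hvar]

lemma not_exists_computable_theta_eq_const :
    ¬ ∃ f : ℕ → ℕ, Computable f ∧ ∀ e, theta (f e) = fun _ => Part.some e := by
  rintro ⟨f, hf, hfe⟩
  obtain ⟨e, he⟩ := exists_eval_self_eq (χ := fun e => mode (f e) - 1)
    ((Primrec.nat_sub.comp primrec_mode (Primrec.const 1)).to_comp.comp hf)
  exact (variant_eq_const (hfe e)).2 (he ▸ Part.mem_some _)

end KolmogorovNotAcceptable

/-- There exists a numbering with the Kolmogorov property that is not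
acceptable: some numbering `ψ` admits no computable translation into `φ`. -/
theorem kolmogorov_not_acceptable :
    ∃ φ : ℕ → ℕ →. ℕ, IsNumbering φ ∧ KolmogorovProperty φ ∧
      ∃ ψ : ℕ → ℕ →. ℕ, IsNumbering ψ ∧
        ¬ ∃ f : ℕ → ℕ, Computable f ∧ ∀ e, φ (f e) = ψ e :=
  ⟨KolmogorovNotAcceptable.theta, KolmogorovNotAcceptable.partrec₂_theta,
    KolmogorovNotAcceptable.kolmogorovProperty_theta, fun e _ => Part.some e, Computable.fst,
    KolmogorovNotAcceptable.not_exists_computable_theta_eq_const⟩
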